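/- In the multiple curve affine LIBOR model, the moment generating function of $X_t$ under the forward measure $P_k^x$ is exponentially affine: $E_k^x[e^{\langle w, X_t\rangle}] = \exp(\phi_t^{k,x}(w) + \langle \psi_t^{k,x}(w), X_0\rangle)$, where $\phi_t^{k,x}(w) = \phi_t(\psi_{T_N-t}(u_k^x) + w) - \phi_t(\psi_{T_N-t}(u_k^x))$ and $\psi_t^{k,x}(w) = \psi_t(\psi_{T_N-t}(u_k^x) + w) - \psi_t(\psi_{T_N-t}(u_k^x))$, for every $w$ such that $\psi_{T_N-t}(u_k^x) + w \in \mathcal{I}_T$. -/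
import Mathlib


open MeasureTheory

/-- under the forward measure `P_k^x` (with density `M^{u_k^x}_t / M^{u_k^x}_0`
with respect to the terminal measure `P_N`), the moment generating function of `X_t` is
exponentially affine:
`E_k^x[exp⟨w, X_t⟩] = exp(φ_t^{k,x}(w) + ⟨ψ_t^{k,x}(w), X_0⟩)` where
`φ_t^{k,x}(w) = φ_t(ψ_{T_N-t}(u_k^x) + w) - φ_t(ψ_{T_N-t}(u_k^x))` and
`ψ_t^{k,x}(w) = ψ_t(ψ_{T_N-t}(u_k^x) + w) - ψ_t(ψ_{T_N-t}(u_k^x))`,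
for every `w` with `ψ_{T_N-t}(u_k^x) + w ∈ I_T`. -/
theorem stmt5 {Ω : Type*} {m0 : MeasurableSpace Ω} (μ : Measure Ω) [IsProbabilityMeasure μ]
    (d : ℕ) (TN t : ℝ) (ht : 0 ≤ t) (htT : t ≤ TN)
    (X : ℝ → Ω → Fin d → ℝ) (x0 : Fin d → ℝ) (hX0 : ∀ ω, X 0 ω = x0)
    (φ : ℝ → (Fin d → ℝ) → ℝ) (ψ : ℝ → (Fin d → ℝ) → (Fin d → ℝ))
    (IT : Set (Fin d → ℝ))
    (hmgf : ∀ v ∈ IT, ∫ ω, Real.exp (∑ i, v i * X t ω i) ∂μ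
        = Real.exp (φ t v + ∑ i, ψ t v i * x0 i))
    (hflowφ : ∀ a b : ℝ, 0 ≤ a → 0 ≤ b → a + b ≤ TN →
      ∀ v, φ (a + b) v = φ a v + φ b (ψ a v))
    (hflowψ : ∀ a b : ℝ, 0 ≤ a → 0 ≤ b → a + b ≤ TN →
      ∀ v, ψ (a + b) v = ψ b (ψ a v))
    (hφ0 : ∀ v, φ 0 v = 0) (hψ0 : ∀ v, ψ 0 v = v)
    (u w : Fin d → ℝ)
    (hu : ψ (TN - t) u ∈ IT) (hw : ψ (TN - t) u + w ∈ IT)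
    (M : ℝ → Ω → ℝ)
    (hM : ∀ s ω, M s ω = Real.exp (φ (TN - s) u + ∑ i, ψ (TN - s) u i * X s ω i)) :
    ∫ ω, Real.exp (∑ i, w i * X t ω i) * (M t ω / M 0 ω) ∂μ
      = Real.exp ((φ t (ψ (TN - t) u + w) - φ t (ψ (TN - t) u))
          + ∑ i, (ψ t (ψ (TN - t) u + w) i - ψ t (ψ (TN - t) u) i) * x0 i) := by
  set v := ψ (TN - t) u with hv
  have hTN : TN - t + t = TN := by ring
  have hφT : φ TN u = φ (TN - t) u + φ t v := by
    have h := hflowφ (TN - t) t (by linarith) ht (by linarith) u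
    rw [hTN] at h; exact h
  have hψT : ψ TN u = ψ t v := by
    have h := hflowψ (TN - t) t (by linarith) ht (by linarith) u
    rw [hTN] at h; exact h
  set C : ℝ := Real.exp (φ (TN - t) u - φ TN u - ∑ i, ψ TN u i * x0 i) with hC
  have hpt : ∀ ω, Real.exp (∑ i, w i * X t ω i) * (M t ω / M 0 ω)
      = Real.exp (∑ i, (v + w) i * X t ω i) * C := by
    intro ω
    rw [hM t ω, hM 0 ω, hX0 ω, hC, sub_zero]
    rw [div_eq_mul_inv, ← Real.exp_neg, ← Real.exp_add, ← Real.exp_add, ← Real.exp_add]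
    congr 1
    have : ∑ i, (v + w) i * X t ω i = ∑ i, v i * X t ω i + ∑ i, w i * X t ω i := by
      rw [← Finset.sum_add_distrib]; apply Finset.sum_congr rfl; intro i _
      simp [Pi.add_apply]; ring
    rw [this]; ring
  rw [integral_congr_ae (Filter.Eventually.of_forall hpt), integral_mul_const,
    hmgf (v + w) hw, hC, hφT, hψT, ← Real.exp_add]
  congr 1
  have hs : ∑ i, (ψ t (v + w) i - ψ t v i) * x0 i
      = ∑ i, ψ t (v + w) i * x0 i - ∑ i, ψ t v i * x0 i := by
    rw [← Finset.sum_sub_distrib]; apply Finset.sum_congr rfl; intro i _; ring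
  rw [hs]; ring
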